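/- Let G be a finite abelian group. The following are equivalent: (i) for all a, b ∈ G, if the additive order of b divides the additive order of a then there exists an additive group endomorphism f : G →+ G with f(a) = b; (ii) there exist k ∈ ℕ, an injective family of primes p₁, …, p_k, and positive natural numbers n₁, …, n_k and m₁, …, m_k such that G is isomorphic as an additive group to ∏_{i=1}^{k} (ZMod (p_i^{n_i}))^{m_i}, i.e., Nonempty (G ≃+ Π i : Fin k, (Fin (m i) → ZMod (p i ^ n i))). -/

import Mathlib

/-!
Multiplication by a scalar sends an element `x` of `ZMod N` to any `y` whose order divides that
of `x`: in a finite cyclic group there are at most `addOrderOf x` elements killed by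
`addOrderOf x`, so these are exactly the multiples of `x`. In a homocyclic `p`-group
`(ZMod (p ^ n))ᵐ` the orders of the coordinates of `a` are powers of `p`, so one coordinate `c`
has the order of `a`; projecting onto `c` and multiplying by suitable scalars in each coordinate
sends `a` to `b`. Primary components have coprime exponents, so `addOrderOf b ∣ addOrderOf a`
passes to each component and the components can be handled separately.

Conversely, write `G` as `∏ ZMod (pᵢ ^ eᵢ)`. If `pᵢ = pⱼ` but `eᵢ < eⱼ`, then `p ^ (eⱼ - eᵢ)` in
the `j`-th factor and `1` in the `i`-th factor both have order `p ^ eᵢ`, yet every image of the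
first is divisible by `p` while the second is not. Hence each prime occurs with a single exponent,
and grouping equal factors gives the product form.
-/

def HasEndoOfAddOrderDvd (G : Type*) [AddMonoid G] : Prop :=
  ∀ a b : G, addOrderOf b ∣ addOrderOf a → ∃ f : G →+ G, f a = b

theorem HasEndoOfAddOrderDvd.of_addEquiv {G H : Type*} [AddMonoid G] [AddMonoid H] (e : G ≃+ H)
    (h : HasEndoOfAddOrderDvd H) : HasEndoOfAddOrderDvd G := by
  intro a b hab
  obtain ⟨f, hf⟩ := h (e a) (e b) (by rwa [AddEquiv.addOrderOf_eq, AddEquiv.addOrderOf_eq])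
  exact ⟨(e.symm.toAddMonoidHom.comp f).comp e.toAddMonoidHom, by simp [hf]⟩

theorem IsAddCyclic.mem_zmultiples_of_addOrderOf_dvd {α : Type*} [AddGroup α] [Finite α]
    [IsAddCyclic α] {x y : α} (h : addOrderOf y ∣ addOrderOf x) :
    y ∈ AddSubgroup.zmultiples x := by
  classical
  cases nonempty_fintype α
  let torsion : Finset α := {z | addOrderOf x • z = 0}
  have hsub : (AddSubgroup.zmultiples x : Set α).toFinset ⊆ torsion := fun z hz => by
    simpa [torsion] using addOrderOf_dvd_iff_nsmul_eq_zero.1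
      (addOrderOf_dvd_of_mem_zmultiples (Set.mem_toFinset.1 hz))
  have hcard : torsion.card ≤ (AddSubgroup.zmultiples x : Set α).toFinset.card := by
    rw [← Nat.card_eq_card_toFinset]
    exact (IsAddCyclic.card_nsmul_eq_zero_le (addOrderOf_pos x)).trans_eq
      (Nat.card_zmultiples x).symm
  have hy : y ∈ torsion := by
    simpa [torsion] using addOrderOf_dvd_iff_nsmul_eq_zero.1 h
  rw [← Finset.eq_of_subset_of_card_le hsub hcard] at hy
  simpa using hy

theorem ZMod.exists_mul_eq_of_addOrderOf_dvd {N : ℕ} [NeZero N] {x y : ZMod N}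
    (h : addOrderOf y ∣ addOrderOf x) : ∃ r : ZMod N, r * x = y := by
  obtain ⟨k, rfl⟩ :=
    AddSubgroup.mem_zmultiples_iff.1 (IsAddCyclic.mem_zmultiples_of_addOrderOf_dvd h)
  exact ⟨k, (zsmul_eq_mul _ _).symm⟩

theorem Nat.dvd_of_le_of_dvd_prime_pow {p n a b : ℕ} (hp : p.Prime) (ha : a ∣ p ^ n)
    (hb : b ∣ p ^ n) (hab : a ≤ b) : a ∣ b := by
  obtain ⟨i, -, rfl⟩ := (Nat.dvd_prime_pow hp).1 ha
  obtain ⟨j, -, rfl⟩ := (Nat.dvd_prime_pow hp).1 hb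
  exact Nat.pow_dvd_pow p ((Nat.pow_le_pow_iff_right hp.one_lt).1 hab)

theorem hasEndoOfAddOrderDvd_fun_zmod_prime_pow (ι : Type*) [Finite ι] {p : ℕ} (hp : p.Prime)
    (n : ℕ) : HasEndoOfAddOrderDvd (ι → ZMod (p ^ n)) := by
  intro a b hab
  cases isEmpty_or_nonempty ι
  · exact ⟨AddMonoidHom.id _, Subsingleton.elim _ _⟩
  have : NeZero (p ^ n) := ⟨pow_ne_zero n hp.ne_zero⟩
  have hdvd_card (z : ZMod (p ^ n)) : addOrderOf z ∣ p ^ n := by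
    simpa using addOrderOf_dvd_natCard z
  -- a coordinate of maximal order carries the order of `a`, since these orders are powers of `p`
  obtain ⟨c, hc⟩ := Finite.exists_max fun i => addOrderOf (a i)
  have hac : addOrderOf a ∣ addOrderOf (a c) :=
    addOrderOf_dvd_of_nsmul_eq_zero <| funext fun i => addOrderOf_dvd_iff_nsmul_eq_zero.1 <|
      Nat.dvd_of_le_of_dvd_prime_pow hp (hdvd_card _) (hdvd_card _) (hc i)
  choose r hr using fun i => ZMod.exists_mul_eq_of_addOrderOf_dvd <|
    ((addOrderOf_map_dvd (Pi.evalAddMonoidHom _ i) b).trans hab).trans hac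
  exact ⟨AddMonoidHom.pi fun i => (AddMonoidHom.mulLeft (r i)).comp (Pi.evalAddMonoidHom _ c),
    funext hr⟩

theorem addOrderOf_apply_dvd_of_coprime_exponent {ι : Type*} [Finite ι] {G : ι → Type*}
    [∀ i, AddMonoid (G i)]
    (hcop : Pairwise fun i j => (AddMonoid.exponent (G i)).Coprime (AddMonoid.exponent (G j)))
    {a b : Π i, G i} (hab : addOrderOf b ∣ addOrderOf a) (i : ι) :
    addOrderOf (b i) ∣ addOrderOf (a i) := by
  classical
  cases nonempty_fintype ι
  let M := ∏ j ∈ Finset.univ.erase i, AddMonoid.exponent (G j)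
  have ha : addOrderOf a ∣ addOrderOf (a i) * M := by
    refine addOrderOf_dvd_of_nsmul_eq_zero <| funext fun j => addOrderOf_dvd_iff_nsmul_eq_zero.1 ?_
    rcases eq_or_ne j i with rfl | hj
    · exact dvd_mul_right _ _
    · exact (AddMonoid.addOrder_dvd_exponent _).trans <|
        (Finset.dvd_prod_of_mem (fun j => AddMonoid.exponent (G j))
          (Finset.mem_erase.2 ⟨hj, Finset.mem_univ j⟩)).trans (dvd_mul_left _ _)
  have hbM : (addOrderOf (b i)).Coprime M :=
    Nat.Coprime.prod_right fun j hj => (hcop (Finset.ne_of_mem_erase hj).symm).coprime_dvd_left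
      (AddMonoid.addOrder_dvd_exponent _)
  exact hbM.dvd_of_dvd_mul_right <|
    (addOrderOf_map_dvd (Pi.evalAddMonoidHom G i) b).trans (hab.trans ha)

theorem HasEndoOfAddOrderDvd.pi {ι : Type*} [Finite ι] {G : ι → Type*} [∀ i, AddMonoid (G i)]
    (hcop : Pairwise fun i j => (AddMonoid.exponent (G i)).Coprime (AddMonoid.exponent (G j)))
    (h : ∀ i, HasEndoOfAddOrderDvd (G i)) : HasEndoOfAddOrderDvd (Π i, G i) := by
  intro a b hab
  choose f hf using fun i => h i (a i) (b i) (addOrderOf_apply_dvd_of_coprime_exponent hcop hab i)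
  exact ⟨AddMonoidHom.piMap f, funext hf⟩

theorem hasEndoOfAddOrderDvd_pi_fun_zmod_prime_pow {k : ℕ} {p : Fin k → ℕ}
    (hp_inj : Function.Injective p) (hp : ∀ i, (p i).Prime) (n m : Fin k → ℕ) :
    HasEndoOfAddOrderDvd (Π i, Fin (m i) → ZMod (p i ^ n i)) := by
  refine HasEndoOfAddOrderDvd.pi (fun i j hij => ?_) fun i =>
    hasEndoOfAddOrderDvd_fun_zmod_prime_pow _ (hp i) (n i)
  have hexp (i : Fin k) : AddMonoid.exponent (Fin (m i) → ZMod (p i ^ n i)) ∣ p i ^ n i :=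
    AddMonoid.exponent_dvd_of_forall_nsmul_eq_zero fun x => funext fun c => by simp
  exact ((Nat.coprime_pow_primes _ _ (hp i) (hp j) (hp_inj.ne hij)).coprime_dvd_left
    (hexp i)).coprime_dvd_right (hexp j)

theorem HasEndoOfAddOrderDvd.le_of_prime_eq {ι : Type*} {p e : ι → ℕ}
    (h : HasEndoOfAddOrderDvd (Π i, ZMod (p i ^ e i))) {i j : ι} (hp : (p i).Prime)
    (hi : e i ≠ 0) (hij : p i = p j) : e j ≤ e i := by
  classical
  by_contra! hlt
  have : Fact (p i).Prime := ⟨hp⟩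
  have hpj : (p j).Prime := hij ▸ hp
  have addOrderOf_single (l : ι) (z : ZMod (p l ^ e l)) :
      addOrderOf (Pi.single (M := fun l => ZMod (p l ^ e l)) l z) = addOrderOf z :=
    addOrderOf_injective (AddMonoidHom.single (fun l => ZMod (p l ^ e l)) l)
      (Pi.single_injective (M := fun l => ZMod (p l ^ e l)) l) z
  set d := e j - e i
  let a₀ : Π l, ZMod (p l ^ e l) := Pi.single j 1
  let b : Π l, ZMod (p l ^ e l) := Pi.single i 1
  have hord : addOrderOf b ∣ addOrderOf (p j ^ d • a₀) := by
    have hgcd : (p j ^ e j).gcd (p j ^ d) = p j ^ d :=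
      Nat.gcd_eq_right (Nat.pow_dvd_pow _ (by omega))
    rw [← Pi.single_smul, addOrderOf_single, addOrderOf_single, ZMod.addOrderOf_one,
      nsmul_eq_mul, mul_one, ZMod.addOrderOf_coe _ (pow_ne_zero _ hpj.ne_zero), hgcd,
      Nat.pow_div (by omega) hpj.pos, hij, show e j - d = e i by omega]
  obtain ⟨f, hf⟩ := h _ b hord
  have hfi : ZMod.castHom (dvd_pow_self (p i) hi) (ZMod (p i)) (f (p j ^ d • a₀) i) = 1 := by
    simp only [hf, b, Pi.single_eq_same, map_one]
  rw [map_nsmul, Pi.smul_apply, map_nsmul, nsmul_eq_mul, Nat.cast_pow, ← hij, ZMod.natCast_self,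
    zero_pow (by omega), zero_mul] at hfi
  exact zero_ne_one hfi

theorem nonempty_pi_addEquiv_pi_subtype {ι : Type*} (M : ι → Type*) [∀ i, AddCommMonoid (M i)]
    (P : ι → Prop) (h : ∀ i, ¬ P i → Subsingleton (M i)) :
    Nonempty ((Π i, M i) ≃+ Π i : {i // P i}, M i) := by
  classical
  exact ⟨{
    toFun x i := x i
    invFun y i := if hi : P i then y ⟨i, hi⟩ else 0
    left_inv x := funext fun i => by
      by_cases hi : P i
      · simp [hi]
      · exact (h i hi).elim _ _
    right_inv y := funext fun i => by simp [i.2]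
    map_add' _ _ := rfl }⟩

theorem exists_addEquiv_pi_zmod_prime_pow (G : Type*) [AddCommGroup G] [Finite G] :
    ∃ (ι : Type) (_ : Fintype ι) (p e : ι → ℕ), (∀ i, (p i).Prime) ∧ (∀ i, e i ≠ 0) ∧
      Nonempty (G ≃+ Π i, ZMod (p i ^ e i)) := by
  obtain ⟨ι, _, p, hp, e, ⟨φ⟩⟩ := AddCommGroup.equiv_directSum_zmod_of_finite G
  obtain ⟨ψ⟩ := nonempty_pi_addEquiv_pi_subtype (fun i => ZMod (p i ^ e i)) (fun i => e i ≠ 0)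
    fun i hi => by rw [not_not.1 hi, pow_zero]; infer_instance
  exact ⟨{i // e i ≠ 0}, inferInstance, fun i => p i, fun i => e i, fun i => hp i, fun i => i.2,
    ⟨(φ.trans (DirectSum.addEquivProd _)).trans ψ⟩⟩

theorem exists_pi_addEquiv_pi_fin_fun {ι α : Type*} [Finite ι] (f : ι → α) (M : α → Type*)
    [∀ a, AddCommMonoid (M a)] :
    ∃ (k : ℕ) (v : Fin k → α) (m : Fin k → ℕ), Function.Injective v ∧
      (∀ j, v j ∈ Set.range f) ∧ (∀ j, 1 ≤ m j) ∧
      Nonempty ((Π i, M (f i)) ≃+ Π j, Fin (m j) → M (v j)) := by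
  classical
  cases nonempty_fintype ι
  let e := Fintype.equivFin (Set.range f)
  let v : Fin (Fintype.card (Set.range f)) → α := fun j => e.symm j
  let g : ι → Fin (Fintype.card (Set.range f)) := fun i => e (Set.rangeFactorization f i)
  have hvg (i : ι) : v (g i) = f i := by simp [v, g, Set.rangeFactorization]
  have hfiber (j) (x : {i // g i = j}) : f x.1 = v j := (hvg x.1).symm.trans (congrArg v x.2)
  refine ⟨_, v, fun j => Fintype.card {i // g i = j},
    fun j j' h => e.symm.injective (Subtype.ext h), fun j => (e.symm j).2, fun j => ?_, ⟨?_⟩⟩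
  · obtain ⟨i, hi⟩ := (e.symm j).2
    exact Fintype.card_pos_iff.2 ⟨⟨i, e.eq_symm_apply.1 (Subtype.ext hi)⟩⟩
  -- `piCongrLeft` and `piCurry` exist as linear equivalences; over `ℕ` they are just additive
  · exact ((LinearEquiv.piCongrLeft ℕ (fun i => M (f i)) (Equiv.sigmaFiberEquiv g)).symm.trans <|
      (LinearEquiv.piCurry ℕ fun j (x : {i // g i = j}) => M (f x.1)).trans <|
      LinearEquiv.piCongrRight fun j =>
        (LinearEquiv.piCongrRight fun x => LinearEquiv.cast (M := M) (hfiber j x)).trans <|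
          LinearEquiv.funCongrLeft ℕ (M (v j)) (Fintype.equivFin _).symm).toAddEquiv

theorem exists_addEquiv_pi_fun_zmod_of_prime_eq {ι : Type*} [Finite ι] {p e : ι → ℕ}
    (hp : ∀ i, (p i).Prime) (he : ∀ i, e i ≠ 0) (hpe : ∀ i j, p i = p j → e i = e j) :
    ∃ (k : ℕ) (q n m : Fin k → ℕ), Function.Injective q ∧ (∀ j, (q j).Prime) ∧
      (∀ j, 1 ≤ n j) ∧ (∀ j, 1 ≤ m j) ∧
      Nonempty ((Π i, ZMod (p i ^ e i)) ≃+ Π j : Fin k, (Fin (m j) → ZMod (q j ^ n j))) := by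
  obtain ⟨k, v, m, hv, hrange, hm, ⟨φ⟩⟩ :=
    exists_pi_addEquiv_pi_fin_fun (fun i => (p i, e i)) fun x => ZMod (x.1 ^ x.2)
  refine ⟨k, fun j => (v j).1, fun j => (v j).2, m, fun j j' hjj' => hv ?_, fun j => ?_,
    fun j => ?_, hm, ⟨φ⟩⟩
  · obtain ⟨i, hi⟩ := hrange j
    obtain ⟨i', hi'⟩ := hrange j'
    simp only [← hi, ← hi'] at hjj' ⊢
    rw [hjj', hpe i i' hjj']
  · obtain ⟨i, hi⟩ := hrange j
    simpa [← hi] using hp i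
  · obtain ⟨i, hi⟩ := hrange j
    simpa [← hi, Nat.one_le_iff_ne_zero] using he i

/-- For a finite abelian group `G`, order-divisibility (`addOrderOf b ∣ addOrderOf a`) implies
the existence of an endomorphism mapping `a` to `b` iff `G` is isomorphic to a product
`∏ᵢ (ZMod pᵢ^{nᵢ})^{mᵢ}` over distinct primes `pᵢ`. -/
theorem endo_of_orderOf_dvd_iff (G : Type*) [AddCommGroup G] [Finite G] :
    (∀ a b : G, addOrderOf b ∣ addOrderOf a → ∃ f : G →+ G, f a = b) ↔
      ∃ (k : ℕ) (p n m : Fin k → ℕ), Function.Injective p ∧ (∀ i, (p i).Prime) ∧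
        (∀ i, 1 ≤ n i) ∧ (∀ i, 1 ≤ m i) ∧
        Nonempty (G ≃+ Π i : Fin k, (Fin (m i) → ZMod (p i ^ n i))) := by
  refine ⟨fun h => ?_, fun ⟨k, p, n, m, hp_inj, hp, _, _, ⟨φ⟩⟩ =>
    (hasEndoOfAddOrderDvd_pi_fun_zmod_prime_pow hp_inj hp n m).of_addEquiv φ⟩
  obtain ⟨ι, _, p, e, hp, he, ⟨φ⟩⟩ := exists_addEquiv_pi_zmod_prime_pow G
  have hpi : HasEndoOfAddOrderDvd (Π i, ZMod (p i ^ e i)) :=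
    HasEndoOfAddOrderDvd.of_addEquiv φ.symm h
  obtain ⟨k, q, n, m, hq, hqp, hn, hm, ⟨ψ⟩⟩ := exists_addEquiv_pi_fun_zmod_of_prime_eq hp he
    fun i j hij => le_antisymm (hpi.le_of_prime_eq (hp j) (he j) hij.symm)
      (hpi.le_of_prime_eq (hp i) (he i) hij)
  exact ⟨k, q, n, m, hq, hqp, hn, hm, ⟨φ.trans ψ⟩⟩
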